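/- Let d ≥ 1 and let F : ℝ^d ⇒ ℝ^d be a cyclically quasi-monotone multi-map with full domain. For every x ∈ ℝ^d, F(x) is contained in the normal cone to C^F(x) at x, i.e. every p ∈ F(x) satisfies p·(y − x) ≤ 0 for all y ∈ C^F(x). -/

import Mathlib

open scoped RealInnerProductSpace

/-- Cyclic quasi-monotonicity of a multi-map `F : ℝ^d ⇒ ℝ^d`. -/
def CyclicallyQuasiMonotone {d : ℕ}
    (F : EuclideanSpace ℝ (Fin d) → Set (EuclideanSpace ℝ (Fin d))) : Prop :=
  ∀ (N : ℕ) (x p : ℕ → EuclideanSpace ℝ (Fin d)),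
    0 < N → x N = x 0 → (∀ i < N, p i ∈ F (x i)) →
    ∃ i < N, ⟪p i, x (i + 1) - x i⟫ ≤ 0

/-- `x 0, …, x N` is an `F`-ascending path. -/
def AscendingPath {d : ℕ} (F : EuclideanSpace ℝ (Fin d) → Set (EuclideanSpace ℝ (Fin d)))
    (x : ℕ → EuclideanSpace ℝ (Fin d)) (N : ℕ) : Prop :=
  ∀ i < N, ∃ p ∈ F (x i), 0 < ⟪p, x (i + 1) - x i⟫

/-- `a ≺_F b`: there is an `F`-ascending path from `a` to `b`. -/
def PrecF {d : ℕ} (F : EuclideanSpace ℝ (Fin d) → Set (EuclideanSpace ℝ (Fin d)))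
    (a b : EuclideanSpace ℝ (Fin d)) : Prop :=
  ∃ (N : ℕ) (x : ℕ → EuclideanSpace ℝ (Fin d)),
    0 < N ∧ x 0 = a ∧ x N = b ∧ AscendingPath F x N

/-- `a ⪯_F b`: `{w : w ≺_F a} ⊆ {w : w ≺_F b}`. -/
def PreceqF {d : ℕ} (F : EuclideanSpace ℝ (Fin d) → Set (EuclideanSpace ℝ (Fin d)))
    (a b : EuclideanSpace ℝ (Fin d)) : Prop :=
  ∀ w, PrecF F w a → PrecF F w b

/-- The convex set `C^F(x) = {w : w ⪯_F x}`. -/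
def CF {d : ℕ} (F : EuclideanSpace ℝ (Fin d) → Set (EuclideanSpace ℝ (Fin d)))
    (x : EuclideanSpace ℝ (Fin d)) : Set (EuclideanSpace ℝ (Fin d)) :=
  {w | PreceqF F w x}

/- If some `p ∈ F x` had `⟪p, y - x⟫ > 0`, the one-step path `x, y` would give `x ≺_F y`, and
`y ⪯_F x` would then give `x ≺_F x`. An `F`-ascending loop is exactly a cycle violating cyclic
quasi-monotonicity. -/

section

variable {d : ℕ} {F : EuclideanSpace ℝ (Fin d) → Set (EuclideanSpace ℝ (Fin d))}

theorem precF_of_inner_pos {a b p : EuclideanSpace ℝ (Fin d)} (hp : p ∈ F a)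
    (h : 0 < ⟪p, b - a⟫) : PrecF F a b := by
  refine ⟨1, fun i => if i = 0 then a else b, one_pos, rfl, rfl, ?_⟩
  intro i hi
  obtain rfl : i = 0 := Nat.lt_one_iff.mp hi
  exact ⟨p, hp, by simpa using h⟩

theorem CyclicallyQuasiMonotone.not_precF_self (hF : CyclicallyQuasiMonotone F)
    (a : EuclideanSpace ℝ (Fin d)) : ¬ PrecF F a a := by
  rintro ⟨N, x, hN, hx0, hxN, hasc⟩
  choose q hq hq_pos using hasc
  classical
  let p : ℕ → EuclideanSpace ℝ (Fin d) := fun i => if hi : i < N then q i hi else 0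
  obtain ⟨i, hi, hle⟩ := hF N x p hN (hxN.trans hx0.symm) fun i hi => by
    simpa only [p, dif_pos hi] using hq i hi
  have hpos : 0 < ⟪p i, x (i + 1) - x i⟫ := by simpa only [p, dif_pos hi] using hq_pos i hi
  exact hle.not_gt hpos

end

theorem stmt8 (d : ℕ)
    (F : EuclideanSpace ℝ (Fin d) → Set (EuclideanSpace ℝ (Fin d)))
    (hF : CyclicallyQuasiMonotone F)
    (x : EuclideanSpace ℝ (Fin d)) :
    ∀ p ∈ F x, ∀ y ∈ CF F x, ⟪p, y - x⟫ ≤ 0 := by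
  intro p hp y hy
  by_contra! h
  exact hF.not_precF_self x (hy x (precF_of_inner_pos hp h))
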